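/- For every p with 1 ≤ p < 4/3 there is a constant C_p > 0 such that for every r > 0, ( ∫_0^∞ S_B(r,t)^p dt )^{1/p} ≤ C_p r^{1/p − 3/2}; for every p with 4/3 < p < ∞ there is a constant C_p > 0 such that for every r > 0, ( ∫_0^∞ S_B(r,t)^p dt )^{1/p} ≤ C_p r^{−1/p}; and sup_{t ≥ 0} S_B(r,t) ≤ C for an absolute constant C. -/

import Mathlib

/-!
The integral representation `J₁(x) = π⁻¹ ∫₀^π cos (s + x sin s) ds` gives `|J₁(x)| ≤ min 1 |x|`,
and van der Corput's lemma, applied away from the stationary point of the phase (close to `π/2`),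
gives `|J₁(x)| ≲ x^{-1/2}`. Hence `|S_B(r,t)| ≲ min 1 (t² - r²)^{-3/4}`. Writing `t = r + u`,
`t² - r² = u (u + 2r) ≥ max (2ru) u²`. For `p < 4/3` the bounds `(2ru)^{-3p/4}` on `(0, 2r)` and
`u^{-3p/2}` on `(2r, ∞)` give `‖S_B(r,·)‖_p^p ≲ r^{1 - 3p/2}`; for `p > 4/3` the majorant
`min 1 (2ru)^{-3p/4}` is integrable and its integral scales like `r⁻¹`.
-/

noncomputable def besselJ (n : ℤ) (x : ℝ) : ℝ :=
  (1 / (2 * Real.pi)) *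
    (∫ s in (-Real.pi)..Real.pi,
      Complex.exp (Complex.I * ((n : ℂ) * (s : ℂ) + (x : ℂ) * (Real.sin s : ℂ)))).re

noncomputable def SB (r t : ℝ) : ℝ :=
  (1 / (4 * Real.pi)) *
    (if r ≤ t then
      (if t = r then 1 / 2
       else besselJ 1 (Real.sqrt (t ^ 2 - r ^ 2)) / Real.sqrt (t ^ 2 - r ^ 2))
     else 0)

open Real MeasureTheory Set intervalIntegral
open scoped ENNReal

theorem besselJ_eq_integral (n : ℤ) (x : ℝ) :
    besselJ n x = π⁻¹ * ∫ s in 0..π, cos (n * s + x * sin s) := by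
  set g : ℝ → ℝ := fun s => cos (n * s + x * sin s)
  have hg : Continuous g := by fun_prop
  have h_re : (∫ s in -π..π,
      Complex.exp (Complex.I * ((n : ℂ) * (s : ℂ) + (x : ℂ) * (sin s : ℂ)))).re
      = ∫ s in -π..π, g s := by
    have hcont : Continuous fun s : ℝ =>
        Complex.exp (Complex.I * ((n : ℂ) * (s : ℂ) + (x : ℂ) * (sin s : ℂ))) := by fun_prop
    rw [← Complex.reCLM_apply, ← Complex.reCLM.intervalIntegral_comp_comm
      (hcont.intervalIntegrable _ _)]
    congr 1 with s
    have h : (n : ℂ) * s + x * (sin s : ℂ) = ((n * s + x * sin s : ℝ) : ℂ) := by push_cast; rfl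
    rw [Complex.reCLM_apply, mul_comm, h, Complex.exp_ofReal_mul_I_re]
  have h_even : ∫ s in -π..0, g s = ∫ s in 0..π, g s := by
    rw [← neg_zero, ← integral_comp_neg]
    simp only [g, sin_neg, ← neg_add, mul_neg, cos_neg, neg_zero]
  rw [besselJ, h_re, ← integral_add_adjacent_intervals (b := 0) (hg.intervalIntegrable _ _)
    (hg.intervalIntegrable _ _), h_even]
  field_simp
  ring

theorem abs_besselJ_le_one (n : ℤ) (x : ℝ) : |besselJ n x| ≤ 1 := by
  have h : |∫ s in 0..π, cos (n * s + x * sin s)| ≤ π := by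
    simpa [abs_of_pos pi_pos] using
      norm_integral_le_of_norm_le_const (a := 0) (b := π) (C := 1)
        (f := fun s => cos (n * s + x * sin s)) fun s _ => abs_cos_le_one _
  rw [besselJ_eq_integral, abs_mul, abs_inv, abs_of_pos pi_pos]
  calc π⁻¹ * _ ≤ π⁻¹ * π := by gcongr
    _ = 1 := inv_mul_cancel₀ pi_ne_zero

theorem abs_besselJ_one_le_abs (x : ℝ) : |besselJ 1 x| ≤ |x| := by
  have h_diff : ∀ s ∈ Ioc 0 π, |cos (s + x * sin s) - cos s| ≤ |x| * sin s := fun s hs => by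
    calc _ ≤ |s + x * sin s - s| := abs_cos_sub_cos_le _ _
      _ = |x| * sin s := by
        rw [add_sub_cancel_left, abs_mul,
          abs_of_nonneg (sin_nonneg_of_nonneg_of_le_pi hs.1.le hs.2)]
  -- subtracting `∫ cos = 0` exposes the factor `x`
  have h_int : |∫ s in 0..π, cos (s + x * sin s)| ≤ 2 * |x| := by
    have h_cos : ∫ s in 0..π, cos s = 0 := by simp
    have hc : ∀ a b : ℝ, IntervalIntegrable (fun s => cos (s + x * sin s)) volume a b :=
      fun a b => (by fun_prop : Continuous _).intervalIntegrable a b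
    calc |∫ s in 0..π, cos (s + x * sin s)|
        = |∫ s in 0..π, (cos (s + x * sin s) - cos s)| := by
          rw [integral_sub (hc _ _) intervalIntegrable_cos, h_cos, sub_zero]
      _ ≤ ∫ s in 0..π, |x| * sin s := norm_integral_le_of_norm_le pi_pos.le
          (.of_forall fun s hs => (Real.norm_eq_abs _).trans_le (h_diff s hs))
          ((continuous_const.mul continuous_sin).intervalIntegrable _ _)
      _ = 2 * |x| := by simp; ring
  rw [besselJ_eq_integral, abs_mul, abs_inv, abs_of_pos pi_pos, Int.cast_one]
  simp only [one_mul]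
  calc π⁻¹ * _ ≤ π⁻¹ * (2 * |x|) := by gcongr
    _ ≤ |x| := by
      rw [← mul_assoc]
      refine mul_le_of_le_one_left (abs_nonneg x) ?_
      rw [inv_mul_le_iff₀ pi_pos]; linarith [pi_gt_three]

/-- Van der Corput's first-derivative estimate for a concave phase. -/
theorem abs_integral_cos_le_of_deriv2_nonpos {φ φ' φ'' : ℝ → ℝ} {a b : ℝ} (hab : a ≤ b)
    (hφ : ∀ s ∈ Icc a b, HasDerivAt φ (φ' s) s) (hφ' : ∀ s ∈ Icc a b, HasDerivAt φ' (φ'' s) s)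
    (hφ''_nonpos : ∀ s ∈ Icc a b, φ'' s ≤ 0) (hφ'_ne : ∀ s ∈ Icc a b, φ' s ≠ 0) :
    |∫ s in a..b, cos (φ s)| ≤ 2 * (|φ' a|⁻¹ + |φ' b|⁻¹) := by
  rw [← uIcc_of_le hab] at hφ hφ' hφ''_nonpos hφ'_ne
  -- integrate by parts against `ψ = 1 / φ'`, which is monotone because `φ'' ≤ 0`
  set ψ' : ℝ → ℝ := fun s => -φ'' s / φ' s ^ 2
  have hψ : ∀ s ∈ uIcc a b, HasDerivAt (fun s => (φ' s)⁻¹) (ψ' s) s := fun s hs =>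
    (hφ' s hs).fun_inv (hφ'_ne s hs)
  have hψ'_nonneg : ∀ s ∈ uIcc a b, 0 ≤ ψ' s := fun s hs =>
    div_nonneg (neg_nonneg.2 (hφ''_nonpos s hs)) (sq_nonneg _)
  have hψ'_int : IntervalIntegrable ψ' volume a b :=
    intervalIntegrable_deriv_of_nonneg (HasDerivAt.continuousOn hψ)
      (fun s hs => hψ s (Ioo_subset_Icc_self hs)) fun s hs => hψ'_nonneg s (Ioo_subset_Icc_self hs)
  have hv : ∀ s ∈ uIcc a b, HasDerivAt (fun s => sin (φ s)) (cos (φ s) * φ' s) s :=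
    fun s hs => (hφ s hs).sin
  have hv'_int : IntervalIntegrable (fun s => cos (φ s) * φ' s) volume a b :=
    ContinuousOn.intervalIntegrable <|
      (continuous_cos.comp_continuousOn (HasDerivAt.continuousOn hφ)).mul
        (HasDerivAt.continuousOn hφ')
  have h_ibp := integral_mul_deriv_eq_deriv_mul hψ hv hψ'_int hv'_int
  have h_ftc : ∫ s in a..b, ψ' s = (φ' b)⁻¹ - (φ' a)⁻¹ :=
    integral_eq_sub_of_hasDerivAt hψ hψ'_int
  have h_rem : |∫ s in a..b, ψ' s * sin (φ s)| ≤ (φ' b)⁻¹ - (φ' a)⁻¹ := by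
    rw [← h_ftc, ← Real.norm_eq_abs]
    refine norm_integral_le_of_norm_le hab (.of_forall fun s hs => ?_) hψ'_int
    have hs' : s ∈ uIcc a b := uIcc_of_le hab ▸ Ioc_subset_Icc_self hs
    rw [Real.norm_eq_abs, abs_mul, abs_of_nonneg (hψ'_nonneg s hs')]
    exact mul_le_of_le_one_right (hψ'_nonneg s hs') (abs_sin_le_one _)
  have h_eq : ∫ s in a..b, cos (φ s) = ∫ s in a..b, (φ' s)⁻¹ * (cos (φ s) * φ' s) :=
    integral_congr fun s hs => by field_simp [hφ'_ne s hs]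
  rw [h_eq, h_ibp]
  have h_bdry : ∀ s, |(φ' s)⁻¹ * sin (φ s)| ≤ |φ' s|⁻¹ := fun s => by
    rw [abs_mul, abs_inv]
    exact mul_le_of_le_one_right (by positivity) (abs_sin_le_one _)
  have hb : (φ' b)⁻¹ ≤ |φ' b|⁻¹ := abs_inv (φ' b) ▸ le_abs_self _
  have ha : -(φ' a)⁻¹ ≤ |φ' a|⁻¹ := abs_inv (φ' a) ▸ neg_le_abs _
  have := abs_sub ((φ' b)⁻¹ * sin (φ b) - (φ' a)⁻¹ * sin (φ a))
    (∫ s in a..b, ψ' s * sin (φ s))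
  have := abs_sub ((φ' b)⁻¹ * sin (φ b)) ((φ' a)⁻¹ * sin (φ a))
  linarith [h_bdry a, h_bdry b]

theorem abs_integral_cos_add_mul_sin_le {x a b : ℝ} (hx : 0 ≤ x) (ha : 0 ≤ a) (hab : a ≤ b)
    (hb : b ≤ π) (hne : ∀ s ∈ Icc a b, 1 + x * cos s ≠ 0) :
    |∫ s in a..b, cos (s + x * sin s)| ≤
      2 * (|1 + x * cos a|⁻¹ + |1 + x * cos b|⁻¹) :=
  abs_integral_cos_le_of_deriv2_nonpos (φ'' := fun s => -(x * sin s)) hab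
    (fun s _ => (hasDerivAt_id s).add ((hasDerivAt_sin s).const_mul x))
    (fun s _ => by simpa using ((hasDerivAt_cos s).const_mul x).const_add 1)
    (fun s hs => neg_nonpos.2 <| mul_nonneg hx <|
      sin_nonneg_of_nonneg_of_le_pi (ha.trans hs.1) (hs.2.trans hb))
    hne

/-- The phase `s + x sin s` is stationary only near `π / 2`: the window `[π/2 - δ, π/2 + 2δ]`,
`δ = x^{-1/2}`, is estimated trivially and the two sides by van der Corput. -/
theorem abs_integral_cos_add_mul_sin_le_div_sqrt {x : ℝ} (hx : 16 ≤ x) :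
    |∫ s in 0..π, cos (s + x * sin s)| ≤ 12 / √x := by
  set y := √x
  have hy : 4 ≤ y := (le_sqrt' (by norm_num)).2 (by linarith)
  have hxy : x = y ^ 2 := (sq_sqrt (by linarith)).symm
  set δ := y⁻¹
  have hδ : δ ≤ 1 / 4 := by rw [one_div]; exact inv_anti₀ (by norm_num) hy
  have hδ0 : 0 < δ := by positivity
  have hxδ : x * δ = y := by rw [hxy, sq, mul_assoc, mul_inv_cancel₀ (by positivity), mul_one]
  have hπ := pi_gt_three
  have hπ2 : (0.63 : ℝ) ≤ 2 / π := by rw [le_div_iff₀ pi_pos]; linarith [pi_lt_d2]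
  -- Jordan's inequality `sin t ≥ 2t/π` pushes the phase derivative `1 + x cos s` to at least
  -- `y / 2` at `π/2 - δ` and at most `-y` at `π/2 + 2δ`
  have hφ'a : y / 2 ≤ 1 + x * cos (π / 2 - δ) := by
    have h := mul_le_mul_of_nonneg_left (mul_le_sin hδ0.le (by linarith)) (by linarith : 0 ≤ x)
    rw [mul_left_comm, hxδ] at h
    rw [cos_pi_div_two_sub]
    nlinarith
  have hφ'b : 1 + x * cos (π / 2 + 2 * δ) ≤ -y := by
    have h := mul_le_mul_of_nonneg_left (mul_le_sin (x := 2 * δ) (by linarith) (by linarith))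
      (by linarith : 0 ≤ x)
    rw [show x * (2 / π * (2 * δ)) = 2 / π * (2 * y) by rw [← hxδ]; ring] at h
    rw [add_comm (π / 2), cos_add_pi_div_two]
    nlinarith
  have h_left : |∫ s in 0..π / 2 - δ, cos (s + x * sin s)| ≤ 2 * ((4 * y)⁻¹ + (y / 2)⁻¹) := by
    refine (abs_integral_cos_add_mul_sin_le (by positivity) le_rfl (by linarith) (by linarith)
      fun s hs => ?_).trans ?_
    · have := cos_nonneg_of_neg_pi_div_two_le_of_le (x := s) (by linarith [hs.1])
        (by linarith [hs.2])
      nlinarith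
    · rw [cos_zero, mul_one, abs_of_pos (by positivity), abs_of_pos (by linarith)]
      gcongr
      nlinarith
  have h_mid : |∫ s in π / 2 - δ..π / 2 + 2 * δ, cos (s + x * sin s)| ≤ 3 * δ := by
    have := norm_integral_le_of_norm_le_const (a := π / 2 - δ) (b := π / 2 + 2 * δ) (C := 1)
        (f := fun s => cos (s + x * sin s)) fun s _ => abs_cos_le_one _
    rw [Real.norm_eq_abs, abs_of_pos (by linarith : 0 < π / 2 + 2 * δ - (π / 2 - δ))] at this
    linarith
  have h_right : |∫ s in π / 2 + 2 * δ..π, cos (s + x * sin s)| ≤ 2 * (y⁻¹ + y⁻¹) := by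
    refine (abs_integral_cos_add_mul_sin_le (by positivity) (by linarith) (by linarith) le_rfl
      fun s hs => ?_).trans ?_
    · have := cos_le_cos_of_nonneg_of_le_pi (by linarith) hs.2 hs.1
      nlinarith
    · rw [cos_pi, abs_of_neg (by linarith), abs_of_neg (by nlinarith)]
      gcongr
      · linarith
      · nlinarith
  have hc : ∀ a b : ℝ, IntervalIntegrable (fun s => cos (s + x * sin s)) volume a b :=
    fun a b => (by fun_prop : Continuous _).intervalIntegrable a b
  rw [← integral_add_adjacent_intervals (hc 0 (π / 2 - δ)) (hc _ π),
    ← integral_add_adjacent_intervals (hc _ (π / 2 + 2 * δ)) (hc _ π)]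
  have h4 : (4 * y)⁻¹ = δ / 4 := by rw [mul_inv, mul_comm]; rfl
  have h2 : (y / 2)⁻¹ = 2 * δ := by rw [inv_div, div_eq_mul_inv, mul_comm]
  rw [h4, h2] at h_left
  calc _ ≤ _ := (abs_add_le _ _).trans (add_le_add h_left (abs_add_le _ _))
    _ ≤ 2 * (δ / 4 + 2 * δ) + (3 * δ + 2 * (δ + δ)) := by gcongr
    _ ≤ 12 * δ := by linarith
    _ = 12 / y := (div_eq_mul_inv _ _).symm

theorem abs_besselJ_one_mul_sqrt_le (x : ℝ) : |besselJ 1 x| * √x ≤ 4 := by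
  rcases le_total x 16 with hx16 | hx16
  · have h4 : √x ≤ 4 := (sqrt_le_left (by norm_num)).2 (by linarith)
    nlinarith [abs_besselJ_le_one 1 x, abs_nonneg (besselJ 1 x), sqrt_nonneg x]
  · have hsx : 0 < √x := sqrt_pos.2 (by linarith)
    rw [besselJ_eq_integral, abs_mul, abs_inv, abs_of_pos pi_pos, Int.cast_one]
    simp only [one_mul]
    calc π⁻¹ * |∫ s in 0..π, cos (s + x * sin s)| * √x ≤ π⁻¹ * (12 / √x) * √x := by
          gcongr
          exact abs_integral_cos_add_mul_sin_le_div_sqrt hx16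
      _ = 12 / π := by field_simp
      _ ≤ 4 := by rw [div_le_iff₀ pi_pos]; linarith [pi_gt_three]

theorem abs_besselJ_one_div_self_le_one (x : ℝ) : |besselJ 1 x / x| ≤ 1 := by
  rw [abs_div]
  exact div_le_one_of_le₀ (abs_besselJ_one_le_abs x) (abs_nonneg x)

theorem abs_SB_le (r t : ℝ) : |SB r t| ≤ (4 * π)⁻¹ := by
  rw [SB, abs_mul, one_div, abs_of_pos (by positivity)]
  refine mul_le_of_le_one_right (by positivity) ?_
  split_ifs
  · norm_num
  · exact abs_besselJ_one_div_self_le_one _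
  · norm_num

theorem abs_SB_add_le {r u : ℝ} (hr : 0 ≤ r) (hu : 0 < u) :
    |SB r (u + r)| ≤ (u * (u + 2 * r)) ^ (-(3 / 4 : ℝ)) := by
  have hw : 0 < u * (u + 2 * r) := by positivity
  have hz : 0 < √(u * (u + 2 * r)) := sqrt_pos.2 hw
  have hSB : |SB r (u + r)| =
      (4 * π)⁻¹ * (|besselJ 1 √(u * (u + 2 * r))| / √(u * (u + 2 * r))) := by
    rw [SB, if_pos (by linarith), if_neg (by linarith), show (u + r) ^ 2 - r ^ 2 =
      u * (u + 2 * r) by ring, abs_mul, abs_div, abs_div, abs_of_pos hz, abs_one,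
      abs_of_pos (by positivity : 0 < 4 * π), one_div]
  have hz32 : √(u * (u + 2 * r)) * √√(u * (u + 2 * r)) = (u * (u + 2 * r)) ^ (3 / 4 : ℝ) := by
    rw [sqrt_eq_rpow, sqrt_eq_rpow, ← rpow_mul hw.le, ← rpow_add hw]
    norm_num
  have hJ := abs_besselJ_one_mul_sqrt_le √(u * (u + 2 * r))
  rw [rpow_neg hw.le, ← hz32, hSB]
  generalize √(u * (u + 2 * r)) = z at hz hJ ⊢
  have hsz : 0 < √z := sqrt_pos.2 hz
  calc (4 * π)⁻¹ * (|besselJ 1 z| / z) = |besselJ 1 z| * √z / (4 * π) * (z * √z)⁻¹ := by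
        field_simp
    _ ≤ 4 / (4 * π) * (z * √z)⁻¹ := by gcongr
    _ ≤ (z * √z)⁻¹ := by
        refine mul_le_of_le_one_left (by positivity) ?_
        rw [div_le_one (by positivity)]
        linarith [pi_gt_three]

theorem abs_SB_add_rpow_le {r u p : ℝ} (hr : 0 ≤ r) (hu : 0 < u) (hp : 0 ≤ p) :
    |SB r (u + r)| ^ p ≤ min 1 ((u * (u + 2 * r)) ^ (-(3 * p / 4))) := by
  have hSB : |SB r (u + r)| ≤ 1 :=
    (abs_SB_le r (u + r)).trans (inv_le_one_of_one_le₀ (by linarith [pi_gt_three]))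
  refine le_min (rpow_le_one (abs_nonneg _) hSB hp) ?_
  calc |SB r (u + r)| ^ p ≤ ((u * (u + 2 * r)) ^ (-(3 / 4 : ℝ))) ^ p :=
        rpow_le_rpow (abs_nonneg _) (abs_SB_add_le hr hu) hp
    _ = (u * (u + 2 * r)) ^ (-(3 * p / 4)) := by
        rw [← rpow_mul (by positivity)]
        ring_nf

theorem lintegral_abs_SB_rpow_le {r p : ℝ} (hr : 0 < r) (hp : 0 < p) :
    ∫⁻ t in Ioi 0, ENNReal.ofReal (|SB r t| ^ p) ≤
      ∫⁻ u in Ioi 0, ENNReal.ofReal (min 1 ((u * (u + 2 * r)) ^ (-(3 * p / 4)))) := by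
  set f : ℝ → ℝ≥0∞ := fun t => ENNReal.ofReal (|SB r t| ^ p)
  have h_supp : f.support ⊆ Ici r := Function.support_subset_iff'.2 fun t ht => by
    rw [mem_Ici] at ht
    simp [f, SB, ht, zero_rpow hp.ne']
  calc ∫⁻ t in Ioi 0, f t ≤ ∫⁻ t, f t := setLIntegral_le_lintegral _ _
    _ = ∫⁻ t in Ioi r, f t := by
        rw [← setLIntegral_eq_of_support_subset h_supp, setLIntegral_congr Ioi_ae_eq_Ici]
    _ = ∫⁻ u in Ioi 0, f (u + r) := by
        rw [← (measurePreserving_add_right volume r).setLIntegral_comp_preimage_emb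
          (measurableEmbedding_addRight r), preimage_add_const_Ioi, sub_self]
    _ ≤ _ := setLIntegral_mono' measurableSet_Ioi fun u hu =>
        ENNReal.ofReal_le_ofReal (abs_SB_add_rpow_le hr.le hu hp.le)

theorem lintegral_Ioc_rpow_neg {γ c : ℝ} (hγ : γ < 1) (hc : 0 ≤ c) :
    ∫⁻ u in Ioc 0 c, ENNReal.ofReal (u ^ (-γ)) = ENNReal.ofReal (c ^ (1 - γ) / (1 - γ)) := by
  have h_nonneg : 0 ≤ᵐ[volume.restrict (Ioc 0 c)] fun u : ℝ => u ^ (-γ) := by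
    filter_upwards [ae_restrict_mem measurableSet_Ioc] with u hu using rpow_nonneg hu.1.le _
  rw [← ofReal_integral_eq_lintegral_ofReal (intervalIntegrable_rpow' (by linarith)).1 h_nonneg,
    ← integral_of_le hc, integral_rpow (.inl (by linarith)), zero_rpow (by linarith), sub_zero,
    neg_add_eq_sub]

theorem lintegral_Ioi_rpow_neg {γ c : ℝ} (hγ : 1 < γ) (hc : 0 < c) :
    ∫⁻ u in Ioi c, ENNReal.ofReal (u ^ (-γ)) = ENNReal.ofReal (c ^ (1 - γ) / (γ - 1)) := by
  have h_nonneg : 0 ≤ᵐ[volume.restrict (Ioi c)] fun u : ℝ => u ^ (-γ) := by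
    filter_upwards [ae_restrict_mem measurableSet_Ioi] with u hu using
      rpow_nonneg (hc.trans hu).le _
  rw [← ofReal_integral_eq_lintegral_ofReal (integrableOn_Ioi_rpow_of_lt (by linarith) hc)
    h_nonneg, integral_Ioi_rpow_of_lt (by linarith) hc, neg_add_eq_sub, ← neg_sub γ 1, div_neg,
    neg_div, neg_neg]

theorem rpow_neg_mul_add_le_mul {u c β : ℝ} (hu : 0 < u) (hc : 0 < c) (hβ : 0 ≤ β) :
    (u * (u + c)) ^ (-β) ≤ c ^ (-β) * u ^ (-β) := by
  rw [← mul_rpow hc.le hu.le]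
  exact rpow_le_rpow_of_nonpos (by positivity) (by nlinarith) (by linarith)

theorem rpow_neg_mul_add_le_sq {u c β : ℝ} (hu : 0 < u) (hc : 0 ≤ c) (hβ : 0 ≤ β) :
    (u * (u + c)) ^ (-β) ≤ u ^ (-(2 * β)) := by
  rw [show -(2 * β) = -β + -β by ring, rpow_add hu, ← mul_rpow hu.le hu.le]
  exact rpow_le_rpow_of_nonpos (by positivity) (by nlinarith) (by linarith)

theorem lintegral_rpow_neg_mul_add_le {β c : ℝ} (hβ : 1 / 2 < β) (hβ' : β < 1) (hc : 0 < c) :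
    ∫⁻ u in Ioi 0, ENNReal.ofReal ((u * (u + c)) ^ (-β)) ≤
      ENNReal.ofReal ((1 / (1 - β) + 1 / (2 * β - 1)) * c ^ (1 - 2 * β)) := by
  rw [← Ioc_union_Ioi_eq_Ioi hc.le, lintegral_union measurableSet_Ioi Ioc_disjoint_Ioi_same]
  have h_near : ∫⁻ u in Ioc 0 c, ENNReal.ofReal ((u * (u + c)) ^ (-β)) ≤
      ENNReal.ofReal (c ^ (1 - 2 * β) / (1 - β)) :=
    calc _ ≤ ∫⁻ u in Ioc 0 c, ENNReal.ofReal (c ^ (-β)) * ENNReal.ofReal (u ^ (-β)) :=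
          setLIntegral_mono' measurableSet_Ioc fun u hu => by
            rw [← ENNReal.ofReal_mul (by positivity)]
            exact ENNReal.ofReal_le_ofReal (rpow_neg_mul_add_le_mul hu.1 hc (by linarith))
      _ = ENNReal.ofReal (c ^ (-β) * (c ^ (1 - β) / (1 - β))) := by
          rw [lintegral_const_mul' _ _ ENNReal.ofReal_ne_top, lintegral_Ioc_rpow_neg hβ' hc.le,
            ← ENNReal.ofReal_mul (by positivity)]
      _ = ENNReal.ofReal (c ^ (1 - 2 * β) / (1 - β)) := by
          rw [← mul_div_assoc, ← rpow_add hc]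
          ring_nf
  have h_far : ∫⁻ u in Ioi c, ENNReal.ofReal ((u * (u + c)) ^ (-β)) ≤
      ENNReal.ofReal (c ^ (1 - 2 * β) / (2 * β - 1)) :=
    calc _ ≤ ∫⁻ u in Ioi c, ENNReal.ofReal (u ^ (-(2 * β))) :=
          setLIntegral_mono' measurableSet_Ioi fun u hu => ENNReal.ofReal_le_ofReal
            (rpow_neg_mul_add_le_sq (hc.trans hu) hc.le (by linarith))
      _ = _ := lintegral_Ioi_rpow_neg (by linarith) hc
  have h_pos : 0 < c ^ (1 - 2 * β) := by positivity
  calc _ ≤ _ := add_le_add h_near h_far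
    _ = _ := by
        rw [← ENNReal.ofReal_add (div_nonneg h_pos.le (by linarith))
          (div_nonneg h_pos.le (by linarith))]
        ring_nf

theorem lintegral_min_one_rpow_neg_mul_add_le {β c : ℝ} (hβ : 1 < β) (hc : 0 < c) :
    ∫⁻ u in Ioi 0, ENNReal.ofReal (min 1 ((u * (u + c)) ^ (-β))) ≤
      ENNReal.ofReal (β / (β - 1) * c⁻¹) := by
  have hc' : 0 < c⁻¹ := inv_pos.2 hc
  rw [← Ioc_union_Ioi_eq_Ioi hc'.le, lintegral_union measurableSet_Ioi Ioc_disjoint_Ioi_same]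
  have h_near : ∫⁻ u in Ioc 0 c⁻¹, ENNReal.ofReal (min 1 ((u * (u + c)) ^ (-β))) ≤
      ENNReal.ofReal c⁻¹ :=
    calc _ ≤ ∫⁻ _ in Ioc 0 c⁻¹, 1 := setLIntegral_mono' measurableSet_Ioc fun u _ =>
          ENNReal.ofReal_le_one.2 (min_le_left _ _)
      _ = ENNReal.ofReal c⁻¹ := by rw [setLIntegral_one, Real.volume_Ioc, sub_zero]
  have h_far : ∫⁻ u in Ioi c⁻¹, ENNReal.ofReal (min 1 ((u * (u + c)) ^ (-β))) ≤
      ENNReal.ofReal (c⁻¹ / (β - 1)) :=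
    calc _ ≤ ∫⁻ u in Ioi c⁻¹, ENNReal.ofReal (c ^ (-β)) * ENNReal.ofReal (u ^ (-β)) :=
          setLIntegral_mono' measurableSet_Ioi fun u hu => by
            rw [← ENNReal.ofReal_mul (by positivity)]
            exact ENNReal.ofReal_le_ofReal ((min_le_right _ _).trans
              (rpow_neg_mul_add_le_mul (hc'.trans hu) hc (by linarith)))
      _ = ENNReal.ofReal (c ^ (-β) * (c⁻¹ ^ (1 - β) / (β - 1))) := by
          rw [lintegral_const_mul' _ _ ENNReal.ofReal_ne_top, lintegral_Ioi_rpow_neg hβ hc',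
            ← ENNReal.ofReal_mul (by positivity)]
      _ = ENNReal.ofReal (c⁻¹ / (β - 1)) := by
          rw [inv_rpow hc.le, ← rpow_neg hc.le, ← mul_div_assoc, ← rpow_add hc, ← rpow_neg_one]
          ring_nf
  calc _ ≤ _ := add_le_add h_near h_far
    _ = _ := by
        rw [← ENNReal.ofReal_add hc'.le (div_nonneg hc'.le (by linarith))]
        congr 1
        field_simp [(by linarith : β - 1 ≠ 0)]
        ring

theorem exists_lintegral_abs_SB_rpow_le_of_lt {p : ℝ} (hp : 2 / 3 < p) (hp' : p < 4 / 3) :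
    ∃ K > 0, ∀ r > 0, ∫⁻ t in Ioi 0, ENNReal.ofReal (|SB r t| ^ p) ≤
      ENNReal.ofReal (K * r ^ (1 - 3 * p / 2)) := by
  have h₁ : 0 < 1 - 3 * p / 4 := by linarith
  have h₂ : 0 < 2 * (3 * p / 4) - 1 := by linarith
  refine ⟨(1 / (1 - 3 * p / 4) + 1 / (2 * (3 * p / 4) - 1)) * 2 ^ (1 - 2 * (3 * p / 4)),
    by positivity, fun r hr => ?_⟩
  calc _ ≤ ∫⁻ u in Ioi 0, ENNReal.ofReal ((u * (u + 2 * r)) ^ (-(3 * p / 4))) :=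
        (lintegral_abs_SB_rpow_le hr (by linarith)).trans <| lintegral_mono fun u =>
          ENNReal.ofReal_le_ofReal (min_le_right _ _)
    _ ≤ _ := lintegral_rpow_neg_mul_add_le (by linarith) (by linarith) (by positivity)
    _ = _ := by
        rw [mul_rpow zero_le_two hr.le, ← mul_assoc]
        ring_nf

theorem exists_lintegral_abs_SB_rpow_le_of_gt {p : ℝ} (hp : 4 / 3 < p) :
    ∃ K > 0, ∀ r > 0, ∫⁻ t in Ioi 0, ENNReal.ofReal (|SB r t| ^ p) ≤
      ENNReal.ofReal (K * r ^ (-1 : ℝ)) := by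
  have h₁ : 0 < 3 * p / 4 - 1 := by linarith
  refine ⟨3 * p / 4 / (3 * p / 4 - 1) / 2, by positivity, fun r hr => ?_⟩
  calc _ ≤ _ := lintegral_abs_SB_rpow_le hr (by linarith)
    _ ≤ _ := lintegral_min_one_rpow_neg_mul_add_le (by linarith) (by positivity)
    _ = _ := by
        rw [rpow_neg_one, mul_inv]
        ring_nf

theorem ENNReal.rpow_one_div_le_ofReal_mul_rpow {I : ℝ≥0∞} {K r e p : ℝ} (hK : 0 ≤ K)
    (hr : 0 < r) (hp : 0 < p) (h : I ≤ ENNReal.ofReal (K * r ^ e)) :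
    I ^ (1 / p) ≤ ENNReal.ofReal (K ^ (1 / p) * r ^ (e / p)) := by
  calc I ^ (1 / p) ≤ ENNReal.ofReal (K * r ^ e) ^ (1 / p) := by gcongr
    _ = _ := by
        rw [ENNReal.ofReal_rpow_of_nonneg (by positivity) (by positivity),
          Real.mul_rpow hK (by positivity), ← Real.rpow_mul hr.le, mul_one_div]

/-- `‖S_B(r,·)‖_{L^p_t(0,∞)} ≤ C_p r^{1/p − 3/2}` for `1 ≤ p < 4/3`,
`‖S_B(r,·)‖_{L^p_t(0,∞)} ≤ C_p r^{−1/p}` for `4/3 < p < ∞`, and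
`S_B(r,t) ≤ C` uniformly in `r > 0`, `t ≥ 0`. -/
theorem SB_Lp_bounds :
    (∀ p : ℝ, 1 ≤ p → p < 4 / 3 → ∃ C : ℝ, 0 < C ∧ ∀ r : ℝ, 0 < r →
      (∫⁻ t in Set.Ioi (0 : ℝ), ENNReal.ofReal (|SB r t| ^ p)) ^ (1 / p) ≤
        ENNReal.ofReal (C * r ^ (1 / p - 3 / 2))) ∧
    (∀ p : ℝ, 4 / 3 < p → ∃ C : ℝ, 0 < C ∧ ∀ r : ℝ, 0 < r →
      (∫⁻ t in Set.Ioi (0 : ℝ), ENNReal.ofReal (|SB r t| ^ p)) ^ (1 / p) ≤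
        ENNReal.ofReal (C * r ^ (-(1 / p)))) ∧
    (∃ C : ℝ, 0 < C ∧ ∀ r : ℝ, 0 < r → ∀ t : ℝ, 0 ≤ t → SB r t ≤ C) := by
  refine ⟨fun p hp hp' => ?_, fun p hp => ?_,
    ⟨(4 * π)⁻¹, by positivity, fun r _ t _ => (le_abs_self _).trans (abs_SB_le r t)⟩⟩
  · obtain ⟨K, hK, hI⟩ := exists_lintegral_abs_SB_rpow_le_of_lt (by linarith) hp'
    refine ⟨K ^ (1 / p), by positivity, fun r hr => ?_⟩
    refine (ENNReal.rpow_one_div_le_ofReal_mul_rpow hK.le hr (by linarith) (hI r hr)).trans_eq ?_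
    rw [show (1 - 3 * p / 2) / p = 1 / p - 3 / 2 by field_simp]
  · obtain ⟨K, hK, hI⟩ := exists_lintegral_abs_SB_rpow_le_of_gt hp
    refine ⟨K ^ (1 / p), by positivity, fun r hr => ?_⟩
    refine (ENNReal.rpow_one_div_le_ofReal_mul_rpow hK.le hr (by linarith) (hI r hr)).trans_eq ?_
    rw [neg_div, one_div]
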